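/- With notation as above, define the combinatorial pairing Φ(F_i, F_j) = (−1)^{dim σ_{ij}} · (number of vertices of σ_{ij}) on the free vector space V spanned by the top-dimensional bounded regions F_1, …, F_r of a generic arrangement in ℝ^m. Then Φ(F_i, F_j) = (−1)^m ⟨Ψ(F_i), Ψ(F_j)⟩, and consequently, if Ψ is injective on V, the pairing Φ is positive definite when m is even and negative definite when m is odd. -/

import Mathlib

open scoped RealInnerProductSpace

/-!
A vertex of `σ = cl F₁ ∩ cl F₂` is a point of `σ` lying on exactly `m` hyperplanes. Their normals
span: otherwise maximise a linear functional orthogonal to them over the compact face of `cl F₁`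
through the vertex; by genericity no further hyperplane passes through the maximiser, so the
functional can still be increased there. Hence a vertex is determined by the set `S` of its
hyperplanes, and `Ψ(F₁)` and `Ψ(F₂)` are simultaneously nonzero exactly on the sets `S` of vertices
of `σ`. There `Ψ(F₁)_S Ψ(F₂)_S` is the product of the signs of the determinants of the normals
rescaled by the two sign vectors, that is `∏_{i ∈ S} φ₁ᵢ φ₂ᵢ = (-1)^d`, where `d` is the number of
hyperplanes separating `F₁` from `F₂` (all of them contain `σ`). Near a vertex, `σ` is cut out of
`cl F₁` by these `d` hyperplanes, whose normals are independent, so `dim σ = m - d` and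
`⟨Ψ(F₁), Ψ(F₂)⟩ = (-1)^d · #vertices(σ) = (-1)^m Φ(F₁, F₂)`. Consequently the quadratic form of
`Φ` is `(-1)^m ‖∑ c_F Ψ(F)‖²`.
-/

/-- The (relatively open) face of the arrangement with sign vector `σ`. -/
def arrFace {ι : Type*} {m : ℕ} (a : ι → EuclideanSpace ℝ (Fin m)) (b : ι → ℝ)
    (σ : ι → SignType) : Set (EuclideanSpace ℝ (Fin m)) :=
  {x | ∀ i, SignType.sign (⟪a i, x⟫ - b i) = σ i}

/-- A top-dimensional bounded region of the arrangement: a nowhere-zero sign vector with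
non-empty bounded face. -/
def isBoundedRegion {ι : Type*} {m : ℕ} (a : ι → EuclideanSpace ℝ (Fin m)) (b : ι → ℝ)
    (φ : ι → SignType) : Prop :=
  (∀ i, φ i ≠ 0) ∧ (arrFace a b φ).Nonempty ∧ Bornology.IsBounded (arrFace a b φ)

open Classical in
/-- The nerve chain `Ψ(F) ∈ C_{m-1}(N; ℝ)` of the region with sign vector `φ`
(cf. STATEMENT 11). -/
noncomputable def PsiChain {s : ℕ} {m : ℕ} (a : Fin s → EuclideanSpace ℝ (Fin m))
    (b : Fin s → ℝ) (φ : Fin s → SignType) : Finset (Fin s) → ℝ := fun S =>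
  if hS : S.card = m then
    if ∃ x ∈ closure (arrFace a b φ), {i | ⟪a i, x⟫ = b i} = (↑S : Set (Fin s)) then
      ((SignType.sign (Matrix.det
        (Matrix.of fun p q : Fin m => ((φ (S.orderIsoOfFin hS p) : ℝ) •
          a (S.orderIsoOfFin hS p)) q)) : ℤ) : ℝ)
    else 0
  else 0

/-- The combinatorial pairing `Φ(F_i, F_j) = (-1)^{dim σ_{ij}} ⋅ #vertices(σ_{ij})`, where
`σ_{ij} = cl F_i ∩ cl F_j`. -/
noncomputable def PhiPair {s : ℕ} {m : ℕ} (a : Fin s → EuclideanSpace ℝ (Fin m))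
    (b : Fin s → ℝ) (φ₁ φ₂ : Fin s → SignType) : ℝ :=
  (-1 : ℝ) ^ (Module.finrank ℝ
      (affineSpan ℝ (closure (arrFace a b φ₁) ∩ closure (arrFace a b φ₂))).direction) *
    (({x ∈ closure (arrFace a b φ₁) ∩ closure (arrFace a b φ₂) |
        ({i | ⟪a i, x⟫ = b i} : Set (Fin s)).ncard = m}).ncard : ℝ)

open Filter Topology

lemma sign_eq_iff_pos_mul {u : SignType} (hu : u ≠ 0) {t : ℝ} :
    SignType.sign t = u ↔ 0 < (u : ℝ) * t := by
  rcases u with _ | _ | _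
  · exact absurd rfl hu
  · simp [sign_eq_neg_one_iff]
  · simp [sign_eq_one_iff]

lemma SignType.coe_ne_zero {u : SignType} (hu : u ≠ 0) : (u : ℝ) ≠ 0 := by
  rcases u with _ | _ | _ <;> simp_all

lemma SignType.coe_mul_self {u : SignType} (hu : u ≠ 0) : (u : ℝ) * u = 1 := by
  rcases u with _ | _ | _ <;> simp_all

lemma SignType.mul_eq_ite {u v : SignType} (hu : u ≠ 0) (hv : v ≠ 0) :
    u * v = if u ≠ v then -1 else 1 := by
  rcases u with _ | _ | _ <;> rcases v with _ | _ | _ <;> simp_all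

lemma SignType.coe_eq_neg_of_ne {u v : SignType} (hu : u ≠ 0) (hv : v ≠ 0) (huv : u ≠ v) :
    (v : ℝ) = -u := by
  rcases u with _ | _ | _ <;> rcases v with _ | _ | _ <;> simp_all

section InnerMap

variable {ι E : Type*} [NormedAddCommGroup E] [InnerProductSpace ℝ E]

noncomputable def innerMap (a : ι → E) (D : Finset ι) : E →ₗ[ℝ] D → ℝ :=
  LinearMap.pi fun i => innerₛₗ ℝ (a i)

@[simp]
lemma innerMap_apply (a : ι → E) (D : Finset ι) (v : E) (i : D) :
    innerMap a D v i = ⟪a i, v⟫ := rfl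

lemma mem_ker_innerMap {a : ι → E} {D : Finset ι} {v : E} :
    v ∈ LinearMap.ker (innerMap a D) ↔ ∀ i ∈ D, ⟪a i, v⟫ = 0 := by
  simp [funext_iff]

variable [FiniteDimensional ℝ E]

theorem exists_inner_eq_of_card_eq_finrank {a : ι → E} {S : Finset ι}
    (hS : S.card = Module.finrank ℝ E) (hspan : ∀ v, (∀ i ∈ S, ⟪a i, v⟫ = 0) → v = 0)
    (u : ι → ℝ) : ∃ w, ∀ i ∈ S, ⟪a i, w⟫ = u i := by
  have hinj : Function.Injective (innerMap a S) :=
    LinearMap.ker_eq_bot.1 (eq_bot_iff.2 fun v hv => hspan v (mem_ker_innerMap.1 hv))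
  obtain ⟨w, hw⟩ := (LinearMap.injective_iff_surjective_of_finrank_eq_finrank
    (by simp [hS])).1 hinj fun i => u i
  exact ⟨w, fun i hi => congrFun hw ⟨i, hi⟩⟩

theorem finrank_ker_innerMap {a : ι → E} {D : Finset ι}
    (hD : Function.Surjective (innerMap a D)) :
    Module.finrank ℝ (LinearMap.ker (innerMap a D)) = Module.finrank ℝ E - D.card := by
  have := (innerMap a D).finrank_range_add_finrank_ker
  rw [LinearMap.range_eq_top.2 hD, finrank_top, Module.finrank_fintype_fun_eq_card,
    Fintype.card_coe] at this
  omega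

end InnerMap

def IsGeneric {ι : Type*} {m : ℕ} (a : ι → EuclideanSpace ℝ (Fin m)) (b : ι → ℝ) : Prop :=
  ∀ x, ({i | ⟪a i, x⟫ = b i} : Set ι).ncard ≤ m

section Faces

variable {ι : Type*} {m : ℕ} {a : ι → EuclideanSpace ℝ (Fin m)} {b : ι → ℝ}
  {φ φ₁ φ₂ : ι → SignType}

lemma inner_add_smul_sub (i : ι) (x w : EuclideanSpace ℝ (Fin m)) (t : ℝ) :
    ⟪a i, x + t • w⟫ - b i = ⟪a i, x⟫ - b i + t * ⟪a i, w⟫ := by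
  rw [inner_add_right, real_inner_smul_right]; ring

theorem closure_arrFace (hφ : ∀ i, φ i ≠ 0) (hne : (arrFace a b φ).Nonempty) :
    closure (arrFace a b φ) = {x | ∀ i, 0 ≤ (φ i : ℝ) * (⟪a i, x⟫ - b i)} := by
  obtain ⟨y, hy⟩ := hne
  refine subset_antisymm (closure_minimal
    (fun x hx i => ((sign_eq_iff_pos_mul (hφ i)).1 (hx i)).le) ?_) fun x hx => ?_
  · simp only [Set.ofPred_forall]
    exact isClosed_iInter fun i => isClosed_le continuous_const (by fun_prop)
  have hseg : ∀ᶠ t in 𝓝[>] (0 : ℝ), x + t • (y - x) ∈ arrFace a b φ := by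
    filter_upwards [Ioo_mem_nhdsGT one_pos] with t ⟨ht₀, ht₁⟩ i
    have hyi := (sign_eq_iff_pos_mul (hφ i)).1 (hy i)
    rw [sign_eq_iff_pos_mul (hφ i), inner_add_smul_sub, inner_sub_right]
    nlinarith [mul_nonneg (sub_nonneg.2 ht₁.le) (hx i)]
  have hcont : Continuous fun t : ℝ => x + t • (y - x) := by fun_prop
  exact mem_closure_of_tendsto
    (by simpa using (hcont.tendsto 0).mono_left nhdsWithin_le_nhds) hseg

theorem exists_add_smul_mem_closure_arrFace [Finite ι] (hφ : ∀ i, φ i ≠ 0)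
    (hne : (arrFace a b φ).Nonempty) {x w : EuclideanSpace ℝ (Fin m)}
    (hx : x ∈ closure (arrFace a b φ))
    (hw : ∀ i, ⟪a i, x⟫ = b i → 0 ≤ (φ i : ℝ) * ⟪a i, w⟫) :
    ∃ t > (0 : ℝ), x + t • w ∈ closure (arrFace a b φ) := by
  rw [closure_arrFace hφ hne] at hx ⊢
  suffices h : ∀ᶠ t in 𝓝[>] (0 : ℝ), ∀ i, 0 ≤ (φ i : ℝ) * (⟪a i, x + t • w⟫ - b i) from
    (h.and self_mem_nhdsWithin).exists.imp fun t ht => ⟨ht.2, ht.1⟩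
  refine eventually_all.2 fun i => ?_
  simp only [inner_add_smul_sub]
  by_cases hi : ⟪a i, x⟫ = b i
  · filter_upwards [self_mem_nhdsWithin] with t (ht : 0 < t)
    rw [hi, sub_self, zero_add, mul_left_comm]
    exact mul_nonneg ht.le (hw i hi)
  · have hslack : 0 < (φ i : ℝ) * (⟪a i, x⟫ - b i) :=
      (hx i).lt_of_ne' (mul_ne_zero (SignType.coe_ne_zero (hφ i)) (sub_ne_zero.2 hi))
    have hcont : Continuous fun t : ℝ => (φ i : ℝ) * (⟪a i, x⟫ - b i + t * ⟪a i, w⟫) := by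
      fun_prop
    refine nhdsWithin_le_nhds (((hcont.tendsto 0).eventually (lt_mem_nhds ?_)).mono
      fun t ht => ht.le)
    simpa using hslack

theorem eq_zero_of_inner_eq_zero_at_vertex [Finite ι] (hgen : IsGeneric a b)
    (hφ : isBoundedRegion a b φ)
    {x : EuclideanSpace ℝ (Fin m)} (hx : x ∈ closure (arrFace a b φ))
    (hxm : ({i | ⟪a i, x⟫ = b i} : Set ι).ncard = m) {v : EuclideanSpace ℝ (Fin m)}
    (hv : ∀ i, ⟪a i, x⟫ = b i → ⟪a i, v⟫ = 0) : v = 0 := by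
  -- maximise `⟪v, ·⟫` over the face of the closed region through `x`
  set K := closure (arrFace a b φ) ∩ {y | ∀ i, ⟪a i, x⟫ = b i → ⟪a i, y⟫ = b i}
  have hK : IsCompact K := by
    refine (Metric.isCompact_of_isClosed_isBounded isClosed_closure hφ.2.2.closure).inter_right ?_
    simp only [Set.ofPred_forall]
    exact isClosed_iInter fun i => isClosed_iInter fun _ => isClosed_eq (by fun_prop) (by fun_prop)
  obtain ⟨z, ⟨hzF, hzx⟩, hmax⟩ :=
    hK.exists_isMaxOn ⟨x, hx, fun _ hi => hi⟩ (f := fun y => ⟪v, y⟫) (by fun_prop)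
  -- genericity: no further hyperplane passes through `z`
  have htight : {i | ⟪a i, x⟫ = b i} = {i | ⟪a i, z⟫ = b i} :=
    Set.eq_of_subset_of_ncard_le hzx (hxm.symm ▸ hgen z) (Set.toFinite _)
  obtain ⟨t, ht, hzt⟩ := exists_add_smul_mem_closure_arrFace hφ.1 hφ.2.1 hzF
    fun i hi => by rw [hv i (htight.symm ▸ hi : i ∈ {i | ⟪a i, x⟫ = b i}), mul_zero]
  have hztK : z + t • v ∈ K := ⟨hzt, fun i hi => by rw [inner_add_right,
    real_inner_smul_right, hv i hi, mul_zero, add_zero, hzx i hi]⟩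
  have hle : ⟪v, z + t • v⟫ ≤ ⟪v, z⟫ := hmax hztK
  rw [inner_add_right, real_inner_smul_right] at hle
  exact real_inner_self_nonpos.1 (nonpos_of_mul_nonpos_right (by linarith) ht)

theorem exists_inner_eq_at_vertex [Finite ι] (hgen : IsGeneric a b)
    (hφ : isBoundedRegion a b φ)
    {x : EuclideanSpace ℝ (Fin m)} (hx : x ∈ closure (arrFace a b φ))
    (hxm : ({i | ⟪a i, x⟫ = b i} : Set ι).ncard = m) (u : ι → ℝ) :
    ∃ w, ∀ i, ⟪a i, x⟫ = b i → ⟪a i, w⟫ = u i := by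
  obtain ⟨w, hw⟩ := exists_inner_eq_of_card_eq_finrank
    (by rw [← Set.ncard_eq_toFinset_card, hxm, finrank_euclideanSpace_fin])
    (fun v hv => eq_zero_of_inner_eq_zero_at_vertex hgen hφ hx hxm
      fun i hi => hv i ((Set.toFinite {i | ⟪a i, x⟫ = b i}).mem_toFinset.2 hi)) u
  exact ⟨w, fun i hi => hw i (by simpa using hi)⟩

theorem eq_of_inner_eq_at_vertex [Finite ι] (hgen : IsGeneric a b)
    (hφ : isBoundedRegion a b φ)
    {x y : EuclideanSpace ℝ (Fin m)} (hx : x ∈ closure (arrFace a b φ))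
    (hxm : ({i | ⟪a i, x⟫ = b i} : Set ι).ncard = m)
    (hy : ∀ i, ⟪a i, x⟫ = b i → ⟪a i, y⟫ = b i) : x = y :=
  sub_eq_zero.1 <| eq_zero_of_inner_eq_zero_at_vertex hgen hφ hx hxm fun i hi => by
    rw [inner_sub_right, hi, hy i hi, sub_self]

theorem mem_closure_inter_closure_iff (hφ₁ : ∀ i, φ₁ i ≠ 0) (hne₁ : (arrFace a b φ₁).Nonempty)
    (hφ₂ : ∀ i, φ₂ i ≠ 0) (hne₂ : (arrFace a b φ₂).Nonempty) {x : EuclideanSpace ℝ (Fin m)} :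
    x ∈ closure (arrFace a b φ₁) ∩ closure (arrFace a b φ₂) ↔
      x ∈ closure (arrFace a b φ₁) ∧ ∀ i, φ₁ i ≠ φ₂ i → ⟪a i, x⟫ = b i := by
  rw [closure_arrFace hφ₁ hne₁, closure_arrFace hφ₂ hne₂]
  simp only [Set.mem_inter_iff, Set.mem_ofPred_eq]
  refine ⟨fun ⟨h₁, h₂⟩ => ⟨h₁, fun i hi => ?_⟩, fun ⟨h₁, hD⟩ => ⟨h₁, fun i => ?_⟩⟩
  · have h₂i := h₂ i
    rw [SignType.coe_eq_neg_of_ne (hφ₁ i) (hφ₂ i) hi] at h₂i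
    have hzero : (φ₁ i : ℝ) * (⟪a i, x⟫ - b i) = 0 := by linarith [h₁ i]
    exact sub_eq_zero.1 ((mul_eq_zero.1 hzero).resolve_left (SignType.coe_ne_zero (hφ₁ i)))
  · by_cases hi : φ₁ i = φ₂ i
    · exact hi ▸ h₁ i
    · rw [hD i hi, sub_self, mul_zero]

end Faces

section Intersection

variable {ι : Type*} [Fintype ι] {m : ℕ} {a : ι → EuclideanSpace ℝ (Fin m)} {b : ι → ℝ}
  {φ₁ φ₂ : ι → SignType}

def separatingSet (φ₁ φ₂ : ι → SignType) : Finset ι := {i | φ₁ i ≠ φ₂ i}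

lemma mem_separatingSet {i : ι} : i ∈ separatingSet φ₁ φ₂ ↔ φ₁ i ≠ φ₂ i := by
  simp [separatingSet]

lemma prod_mul_prod_eq_neg_one_pow (hφ₁ : ∀ i, φ₁ i ≠ 0) (hφ₂ : ∀ i, φ₂ i ≠ 0) {S : Finset ι}
    (hS : separatingSet φ₁ φ₂ ⊆ S) :
    (∏ i ∈ S, φ₁ i) * ∏ i ∈ S, φ₂ i = (-1) ^ (separatingSet φ₁ φ₂).card := by
  classical
  have hmul : ∀ i, φ₁ i * φ₂ i = if i ∈ separatingSet φ₁ φ₂ then -1 else 1 := fun i => by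
    simp only [mem_separatingSet, SignType.mul_eq_ite (hφ₁ i) (hφ₂ i)]
  rw [← Finset.prod_mul_distrib, Finset.prod_congr rfl fun i _ => hmul i, Finset.prod_ite_mem,
    Finset.inter_eq_right.2 hS, Finset.prod_const]

theorem mem_direction_of_feasible (h₁ : isBoundedRegion a b φ₁) (h₂ : isBoundedRegion a b φ₂)
    {x u : EuclideanSpace ℝ (Fin m)}
    (hx : x ∈ closure (arrFace a b φ₁) ∩ closure (arrFace a b φ₂))
    (huD : ∀ i ∈ separatingSet φ₁ φ₂, ⟪a i, u⟫ = 0)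
    (hu : ∀ i, ⟪a i, x⟫ = b i → 0 ≤ (φ₁ i : ℝ) * ⟪a i, u⟫) :
    u ∈ (affineSpan ℝ (closure (arrFace a b φ₁) ∩ closure (arrFace a b φ₂))).direction := by
  set σ := closure (arrFace a b φ₁) ∩ closure (arrFace a b φ₂)
  have hσ := fun y => mem_closure_inter_closure_iff (a := a) (b := b) (x := y)
    h₁.1 h₁.2.1 h₂.1 h₂.2.1
  obtain ⟨hx₁, hxD⟩ := (hσ x).1 hx
  obtain ⟨t, ht, hxt⟩ := exists_add_smul_mem_closure_arrFace h₁.1 h₁.2.1 hx₁ hu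
  have hxtσ : x + t • u ∈ σ := (hσ _).2 ⟨hxt, fun i hi => by
    rw [inner_add_right, real_inner_smul_right, huD i (mem_separatingSet.2 hi), mul_zero,
      add_zero, hxD i hi]⟩
  have htu := AffineSubspace.vsub_mem_direction (subset_affineSpan ℝ σ hxtσ)
    (subset_affineSpan ℝ σ hx)
  rw [vsub_eq_sub, add_sub_cancel_left] at htu
  exact (Submodule.smul_mem_iff _ ht.ne').1 htu

theorem direction_affineSpan_closure_inter_closure (hgen : IsGeneric a b)
    (h₁ : isBoundedRegion a b φ₁) (h₂ : isBoundedRegion a b φ₂) {x : EuclideanSpace ℝ (Fin m)}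
    (hx : x ∈ closure (arrFace a b φ₁) ∩ closure (arrFace a b φ₂))
    (hxm : ({i | ⟪a i, x⟫ = b i} : Set ι).ncard = m) :
    (affineSpan ℝ (closure (arrFace a b φ₁) ∩ closure (arrFace a b φ₂))).direction =
      LinearMap.ker (innerMap a (separatingSet φ₁ φ₂)) := by
  classical
  have hσ := fun y => (mem_closure_inter_closure_iff (a := a) (b := b) (x := y)
    h₁.1 h₁.2.1 h₂.1 h₂.2.1).1
  refine le_antisymm ?_ fun v hv => ?_
  · rw [direction_affineSpan, vectorSpan_def, Submodule.span_le]
    rintro _ ⟨y, hy, z, hz, rfl⟩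
    refine mem_ker_innerMap.2 fun i hi => ?_
    change ⟪a i, y - z⟫ = 0
    rw [inner_sub_right, (hσ y hy).2 i (mem_separatingSet.1 hi),
      (hσ z hz).2 i (mem_separatingSet.1 hi), sub_self]
  obtain ⟨hx₁, hxD⟩ := hσ x hx
  -- `w` points into `F₁` across every hyperplane through `x` except the separating ones
  obtain ⟨w, hw⟩ := exists_inner_eq_at_vertex hgen h₁ hx₁ hxm
    fun i => if i ∈ separatingSet φ₁ φ₂ then 0 else (φ₁ i : ℝ)
  have hwD : ∀ i ∈ separatingSet φ₁ φ₂, ⟪a i, w⟫ = 0 := fun i hi => by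
    rw [hw i (hxD i (mem_separatingSet.1 hi)), if_pos hi]
  have hwx : ∀ i, ⟪a i, x⟫ = b i →
      (φ₁ i : ℝ) * ⟪a i, w⟫ = if i ∈ separatingSet φ₁ φ₂ then 0 else 1 := fun i hi => by
    rw [hw i hi]
    split_ifs <;> simp [SignType.coe_mul_self (h₁.1 i)]
  have hwdir := mem_direction_of_feasible h₁ h₂ hx hwD fun i hi => by
    rw [hwx i hi]; split_ifs <;> norm_num
  have hvD := mem_ker_innerMap.1 hv
  -- for large `c` also `v + c • w` is feasible, and `v = (v + c • w) - c • w`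
  obtain ⟨c, hc⟩ := (eventually_all.2 fun i =>
    eventually_ge_atTop (-((φ₁ i : ℝ) * ⟪a i, v⟫))).exists
  have hvwdir : v + c • w ∈ (affineSpan ℝ (closure (arrFace a b φ₁) ∩
      closure (arrFace a b φ₂))).direction := by
    refine mem_direction_of_feasible h₁ h₂ hx (fun i hi => ?_) fun i hi => ?_ <;>
      rw [inner_add_right, real_inner_smul_right]
    · rw [hvD i hi, hwD i hi, mul_zero, add_zero]
    · rw [mul_add, mul_left_comm, hwx i hi]
      split_ifs with hiD
      · simp [hvD i hiD]
      · linarith [hc i]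
  simpa using sub_mem hvwdir (Submodule.smul_mem _ c hwdir)

theorem finrank_direction_affineSpan_closure_inter_closure (hgen : IsGeneric a b)
    (h₁ : isBoundedRegion a b φ₁) (h₂ : isBoundedRegion a b φ₂)
    {x : EuclideanSpace ℝ (Fin m)} (hx : x ∈ closure (arrFace a b φ₁) ∩ closure (arrFace a b φ₂))
    (hxm : ({i | ⟪a i, x⟫ = b i} : Set ι).ncard = m) :
    Module.finrank ℝ
        (affineSpan ℝ (closure (arrFace a b φ₁) ∩ closure (arrFace a b φ₂))).direction =
      m - (separatingSet φ₁ φ₂).card := by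
  classical
  obtain ⟨hx₁, hxD⟩ := (mem_closure_inter_closure_iff h₁.1 h₁.2.1 h₂.1 h₂.2.1).1 hx
  rw [direction_affineSpan_closure_inter_closure hgen h₁ h₂ hx hxm, finrank_ker_innerMap,
    finrank_euclideanSpace_fin]
  intro u
  obtain ⟨w, hw⟩ := exists_inner_eq_at_vertex hgen h₁ hx₁ hxm
    fun i => if hi : i ∈ separatingSet φ₁ φ₂ then u ⟨i, hi⟩ else 0
  exact ⟨w, funext fun i => by simp [hw i (hxD i (mem_separatingSet.1 i.2))]⟩

end Intersection

lemma sum_sum_mul_mul_sum_mul_eq_sum_sq {α β : Type*} [Fintype α] [Fintype β] (c : α → ℝ)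
    (f : α → β → ℝ) :
    ∑ x, ∑ y, c x * c y * ∑ S, f x S * f y S = ∑ S, (∑ x, c x * f x S) ^ 2 := by
  simp_rw [sq, Finset.sum_mul_sum, Finset.mul_sum]
  rw [Finset.sum_comm (s := Finset.univ (α := β))]
  refine Finset.sum_congr rfl fun x _ => ?_
  rw [Finset.sum_comm (s := Finset.univ (α := β))]
  exact Finset.sum_congr rfl fun y _ => Finset.sum_congr rfl fun S _ => by ring

section Nerve

variable {s m : ℕ} {a : Fin s → EuclideanSpace ℝ (Fin m)} {b : Fin s → ℝ}
  {φ φ₁ φ₂ : Fin s → SignType}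

def normalsMatrix (a : Fin s → EuclideanSpace ℝ (Fin m)) (S : Finset (Fin s)) (hS : S.card = m) :
    Matrix (Fin m) (Fin m) ℝ :=
  Matrix.of fun p q => a (S.orderIsoOfFin hS p) q

lemma det_normalsMatrix_ne_zero {S : Finset (Fin s)} (hS : S.card = m)
    (hspan : ∀ v, (∀ i ∈ S, ⟪a i, v⟫ = 0) → v = 0) : (normalsMatrix a S hS).det ≠ 0 := by
  intro hdet
  obtain ⟨v, hv0, hv⟩ := Matrix.exists_mulVec_eq_zero_iff.2 hdet
  refine hv0 (congrArg WithLp.ofLp (hspan (WithLp.toLp 2 v) fun i hi => ?_))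
  have := congrFun hv ((S.orderIsoOfFin hS).symm ⟨i, hi⟩)
  simp only [normalsMatrix, Matrix.mulVec, dotProduct, Matrix.of_apply, OrderIso.apply_symm_apply,
    Pi.zero_apply] at this
  simpa [PiLp.inner_apply, mul_comm] using this

lemma psiChain_eq {S : Finset (Fin s)} (hS : S.card = m)
    (hx : ∃ x ∈ closure (arrFace a b φ), {i | ⟪a i, x⟫ = b i} = (S : Set (Fin s))) :
    PsiChain a b φ S = ((∏ i ∈ S, φ i) * SignType.sign (normalsMatrix a S hS).det : SignType) := by
  have hmat : (Matrix.of fun p q : Fin m => ((φ (S.orderIsoOfFin hS p) : ℝ) •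
      a (S.orderIsoOfFin hS p)) q) =
      Matrix.of fun p q => (φ (S.orderIsoOfFin hS p) : ℝ) * normalsMatrix a S hS p q := rfl
  have hprod : ∏ p, φ (S.orderIsoOfFin hS p) = ∏ i ∈ S, φ i := by
    rw [← Finset.prod_coe_sort S]
    exact (S.orderIsoOfFin hS).toEquiv.prod_comp fun i : S => φ i
  have hcast : ∏ p, (φ (S.orderIsoOfFin hS p) : ℝ) = ((∏ i ∈ S, φ i : SignType) : ℝ) := by
    rw [← hprod]
    exact (map_prod (SignType.castHom (α := ℝ)) _ _).symm
  have hsign : ∀ u : SignType, SignType.sign (u : ℝ) = u := by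
    rintro (_ | _ | _) <;> simp
  rw [PsiChain, dif_pos hS, if_pos hx, hmat, Matrix.det_mul_column, sign_mul, hcast, hsign,
    SignType.intCast_cast]

lemma card_eq_and_exists_of_psiChain_ne_zero {S : Finset (Fin s)} (h : PsiChain a b φ S ≠ 0) :
    S.card = m ∧ ∃ x ∈ closure (arrFace a b φ), {i | ⟪a i, x⟫ = b i} = (S : Set (Fin s)) := by
  unfold PsiChain at h
  split_ifs at h with hS hx
  exacts [⟨hS, hx⟩, absurd rfl h, absurd rfl h]

def commonVertices (a : Fin s → EuclideanSpace ℝ (Fin m)) (b : Fin s → ℝ)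
    (φ₁ φ₂ : Fin s → SignType) : Set (EuclideanSpace ℝ (Fin m)) :=
  {x ∈ closure (arrFace a b φ₁) ∩ closure (arrFace a b φ₂) |
    ({i | ⟪a i, x⟫ = b i} : Set (Fin s)).ncard = m}

open Classical in
theorem psiChain_mul_psiChain (hgen : IsGeneric a b) (h₁ : isBoundedRegion a b φ₁)
    (h₂ : isBoundedRegion a b φ₂) (S : Finset (Fin s)) :
    PsiChain a b φ₁ S * PsiChain a b φ₂ S =
      if ∃ x ∈ commonVertices a b φ₁ φ₂, {i | ⟪a i, x⟫ = b i} = (S : Set (Fin s))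
      then (-1) ^ (separatingSet φ₁ φ₂).card else 0 := by
  split_ifs with hV
  · obtain ⟨x, ⟨hxσ, hxm⟩, hxS⟩ := hV
    have hS : S.card = m := by rw [← Set.ncard_coe_finset, ← hxS, hxm]
    have hmemS : ∀ i, i ∈ S ↔ ⟪a i, x⟫ = b i := fun i => by rw [← Finset.mem_coe, ← hxS]; rfl
    have hdet := det_normalsMatrix_ne_zero hS fun v hv =>
      eq_zero_of_inner_eq_zero_at_vertex hgen h₁ hxσ.1 hxm fun i hi => hv i ((hmemS i).2 hi)
    have hxD := ((mem_closure_inter_closure_iff h₁.1 h₁.2.1 h₂.1 h₂.2.1).1 hxσ).2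
    have hDS : separatingSet φ₁ φ₂ ⊆ S := fun i hi => (hmemS i).2 (hxD i (mem_separatingSet.1 hi))
    rw [psiChain_eq hS ⟨x, hxσ.1, hxS⟩, psiChain_eq hS ⟨x, hxσ.2, hxS⟩, ← SignType.coe_mul,
      mul_mul_mul_comm, prod_mul_prod_eq_neg_one_pow h₁.1 h₂.1 hDS, ← sign_mul,
      sign_pos (mul_self_pos.2 hdet), mul_one]
    simp
  · by_contra hne
    obtain ⟨hS, x₁, hx₁, hx₁S⟩ := card_eq_and_exists_of_psiChain_ne_zero (left_ne_zero_of_mul hne)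
    obtain ⟨-, x₂, hx₂, hx₂S⟩ := card_eq_and_exists_of_psiChain_ne_zero (right_ne_zero_of_mul hne)
    have hx₁m : ({i | ⟪a i, x₁⟫ = b i} : Set (Fin s)).ncard = m := by
      rw [hx₁S, Set.ncard_coe_finset, hS]
    have hx₁₂ := eq_of_inner_eq_at_vertex hgen h₁ hx₁ hx₁m (y := x₂) fun i hi => by
      change i ∈ {i | ⟪a i, x₂⟫ = b i}
      rw [hx₂S, ← hx₁S]
      exact hi
    exact hV ⟨x₁, ⟨⟨hx₁, hx₁₂ ▸ hx₂⟩, hx₁m⟩, hx₁S⟩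

theorem sum_psiChain_mul_psiChain (hgen : IsGeneric a b) (h₁ : isBoundedRegion a b φ₁)
    (h₂ : isBoundedRegion a b φ₂) :
    ∑ S, PsiChain a b φ₁ S * PsiChain a b φ₂ S =
      (-1) ^ (separatingSet φ₁ φ₂).card * (commonVertices a b φ₁ φ₂).ncard := by
  classical
  simp_rw [psiChain_mul_psiChain hgen h₁ h₂]
  rw [Finset.sum_ite, Finset.sum_const_zero, add_zero, Finset.sum_const, nsmul_eq_mul, mul_comm]
  congr 2
  -- a common vertex is determined by the hyperplanes through it
  rw [← Set.ncard_coe_finset]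
  refine (Set.ncard_congr (fun x _ => (Set.toFinite {i | ⟪a i, x⟫ = b i}).toFinset) ?_ ?_ ?_).symm
  · intro x hx
    simpa using ⟨x, hx, by simp⟩
  · intro x y hx hy hxy
    rw [Set.Finite.toFinset_inj] at hxy
    exact eq_of_inner_eq_at_vertex hgen h₁ hx.1.1 hx.2 fun i hi =>
      (hxy ▸ hi : i ∈ {i | ⟪a i, y⟫ = b i})
  · intro S hS
    obtain ⟨x, hx, hxS⟩ := by simpa using hS
    exact ⟨x, hx, Finset.ext fun i => by rw [Set.Finite.mem_toFinset, hxS, Finset.mem_coe]⟩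

theorem phiPair_eq_neg_one_pow_mul_sum (hgen : IsGeneric a b) (h₁ : isBoundedRegion a b φ₁)
    (h₂ : isBoundedRegion a b φ₂) :
    PhiPair a b φ₁ φ₂ = (-1) ^ m * ∑ S, PsiChain a b φ₁ S * PsiChain a b φ₂ S := by
  rw [sum_psiChain_mul_psiChain hgen h₁ h₂]
  change _ * ((commonVertices a b φ₁ φ₂).ncard : ℝ) = _
  rcases (commonVertices a b φ₁ φ₂).eq_empty_or_nonempty with hV | ⟨x, hxσ, hxm⟩
  · simp [hV]
  have hxD := ((mem_closure_inter_closure_iff h₁.1 h₁.2.1 h₂.1 h₂.2.1).1 hxσ).2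
  have hD : (separatingSet φ₁ φ₂).card ≤ m := by
    rw [← hxm, ← Set.ncard_coe_finset]
    exact Set.ncard_le_ncard fun i hi => hxD i (mem_separatingSet.1 hi)
  obtain ⟨k, hk⟩ := Nat.exists_eq_add_of_le hD
  have hsq : ((-1 : ℝ) ^ (separatingSet φ₁ φ₂).card) ^ 2 = 1 := by
    rw [← pow_mul, mul_comm, pow_mul, neg_one_sq, one_pow]
  rw [finrank_direction_affineSpan_closure_inter_closure hgen h₁ h₂ hxσ hxm,
    show m - (separatingSet φ₁ φ₂).card = k by omega,
    show (-1 : ℝ) ^ m = (-1) ^ (separatingSet φ₁ φ₂).card * (-1) ^ k by rw [← pow_add, ← hk]]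
  linear_combination (-(-1 : ℝ) ^ k * (commonVertices a b φ₁ φ₂).ncard) * hsq

theorem sum_sum_mul_mul_phiPair (hgen : IsGeneric a b) {c : (Fin s → SignType) → ℝ}
    (hc : ∀ φ, ¬ isBoundedRegion a b φ → c φ = 0) :
    ∑ φ₁, ∑ φ₂, c φ₁ * c φ₂ * PhiPair a b φ₁ φ₂ =
      (-1) ^ m * ∑ S, (∑ φ, c φ * PsiChain a b φ S) ^ 2 := by
  rw [← sum_sum_mul_mul_sum_mul_eq_sum_sq, Finset.mul_sum]
  refine Finset.sum_congr rfl fun φ₁ _ => ?_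
  rw [Finset.mul_sum]
  refine Finset.sum_congr rfl fun φ₂ _ => ?_
  by_cases h₁ : isBoundedRegion a b φ₁
  · by_cases h₂ : isBoundedRegion a b φ₂
    · rw [phiPair_eq_neg_one_pow_mul_sum hgen h₁ h₂]; ring
    · simp [hc φ₂ h₂]
  · simp [hc φ₁ h₁]

end Nerve

theorem stmt_12_general (s m : ℕ) (a : Fin s → EuclideanSpace ℝ (Fin m)) (b : Fin s → ℝ)
    (hgeneric : ∀ x : EuclideanSpace ℝ (Fin m),
      ({i | ⟪a i, x⟫ = b i} : Set (Fin s)).ncard ≤ m) :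
    (∀ φ₁ φ₂ : Fin s → SignType, isBoundedRegion a b φ₁ → isBoundedRegion a b φ₂ →
      PhiPair a b φ₁ φ₂ =
        (-1 : ℝ) ^ m * ∑ S : Finset (Fin s), PsiChain a b φ₁ S * PsiChain a b φ₂ S) ∧
    ((∀ c : (Fin s → SignType) → ℝ, (∀ φ, ¬ isBoundedRegion a b φ → c φ = 0) →
        (∀ S : Finset (Fin s), (∑ φ : Fin s → SignType, c φ * PsiChain a b φ S) = 0) →
        c = 0) →
      ∀ c : (Fin s → SignType) → ℝ, (∀ φ, ¬ isBoundedRegion a b φ → c φ = 0) → c ≠ 0 →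
        (Even m → 0 < ∑ φ₁ : Fin s → SignType, ∑ φ₂ : Fin s → SignType,
            c φ₁ * c φ₂ * PhiPair a b φ₁ φ₂) ∧
        (Odd m → (∑ φ₁ : Fin s → SignType, ∑ φ₂ : Fin s → SignType,
            c φ₁ * c φ₂ * PhiPair a b φ₁ φ₂) < 0)) := by
  refine ⟨fun _ _ => phiPair_eq_neg_one_pow_mul_sum hgeneric, fun hinj c hc hc0 => ?_⟩
  have hpos : 0 < ∑ S, (∑ φ, c φ * PsiChain a b φ S) ^ 2 := by
    refine (Finset.sum_nonneg fun S _ => sq_nonneg _).lt_of_ne fun h => hc0 (hinj c hc fun S => ?_)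
    exact pow_eq_zero_iff two_ne_zero |>.1
      ((Finset.sum_eq_zero_iff_of_nonneg fun S _ => sq_nonneg _).1 h.symm S (Finset.mem_univ S))
  rw [sum_sum_mul_mul_phiPair hgeneric hc]
  exact ⟨fun hm => by simpa [hm.neg_one_pow] using hpos,
    fun hm => by simpa [hm.neg_one_pow] using hpos⟩

/-- On the free vector space `V` spanned by the top-dimensional bounded
regions of a generic arrangement in `ℝ^m` (coefficient functions `c` supported on the
bounded regions), the combinatorial pairing satisfies
`Φ(F_i, F_j) = (-1)^m ⟨Ψ(F_i), Ψ(F_j)⟩`; consequently, if the linear extension of `Ψ` is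
injective on `V`, then `Φ` is positive definite when `m` is even and negative definite when
`m` is odd. -/
theorem stmt_12 (s m : ℕ) (a : Fin s → EuclideanSpace ℝ (Fin m)) (b : Fin s → ℝ)
    (ha : ∀ i, a i ≠ 0)
    (hgeneric : ∀ x : EuclideanSpace ℝ (Fin m),
      ({i | ⟪a i, x⟫ = b i} : Set (Fin s)).ncard ≤ m) :
    (∀ φ₁ φ₂ : Fin s → SignType, isBoundedRegion a b φ₁ → isBoundedRegion a b φ₂ →
      PhiPair a b φ₁ φ₂ =
        (-1 : ℝ) ^ m * ∑ S : Finset (Fin s), PsiChain a b φ₁ S * PsiChain a b φ₂ S) ∧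
    ((∀ c : (Fin s → SignType) → ℝ, (∀ φ, ¬ isBoundedRegion a b φ → c φ = 0) →
        (∀ S : Finset (Fin s), (∑ φ : Fin s → SignType, c φ * PsiChain a b φ S) = 0) →
        c = 0) →
      ∀ c : (Fin s → SignType) → ℝ, (∀ φ, ¬ isBoundedRegion a b φ → c φ = 0) → c ≠ 0 →
        (Even m → 0 < ∑ φ₁ : Fin s → SignType, ∑ φ₂ : Fin s → SignType,
            c φ₁ * c φ₂ * PhiPair a b φ₁ φ₂) ∧
        (Odd m → (∑ φ₁ : Fin s → SignType, ∑ φ₂ : Fin s → SignType,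
            c φ₁ * c φ₂ * PhiPair a b φ₁ φ₂) < 0)) :=
  stmt_12_general s m a b hgeneric
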